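/- Let A be a flat layout and N a positive integer. Then there exists an N-complement of A if and only if A is N-complementable. -/

import Mathlib

/-- A flat layout, represented as its list of modes `(sᵢ, dᵢ)`:
the first component of each mode is a shape entry, the second a stride entry. -/
abbrev FlatLayout := List (ℕ × ℕ)

namespace FlatLayout

/-- Validity of a flat layout: every shape entry is a positive integer. -/
def Valid (L : FlatLayout) : Prop := ∀ p ∈ L, 0 < p.1

/-- The size of a flat layout: the product of its shape entries. -/
def size (L : FlatLayout) : ℕ := (L.map Prod.fst).prod

/-- The cosize of a flat layout: `1 + Σ (sᵢ - 1) * dᵢ`. -/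
def cosize (L : FlatLayout) : ℕ := 1 + (L.map fun p => (p.1 - 1) * p.2).sum

/-- The rank of a flat layout: its number of modes. -/
def rank (L : FlatLayout) : ℕ := L.length

/-- The layout function `Φ_L`: `Φ_L(x) = Σ xᵢ·dᵢ` where
`xᵢ = ⌊x / (s₁⋯sᵢ₋₁)⌋ mod sᵢ`. -/
def phi : FlatLayout → ℕ → ℕ
  | [], _ => 0
  | (s, d) :: rest, x => x % s * d + phi rest (x / s)

/-- `squeeze L` deletes every mode whose shape entry equals `1`. -/
def squeeze (L : FlatLayout) : FlatLayout := L.filter fun p => p.1 != 1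

/-- `filterZeros L` deletes every mode whose stride entry equals `0`. -/
def filterZeros (L : FlatLayout) : FlatLayout := L.filter fun p => p.2 != 0

/-- The ordering on modes: `(s,d) ⪯ (s',d')` iff `d < d'`, or `d = d'` and `s ≤ s'`. -/
def ModeLE (p q : ℕ × ℕ) : Prop := p.2 < q.2 ∨ (p.2 = q.2 ∧ p.1 ≤ q.1)

instance : DecidableRel ModeLE := fun p q => by unfold ModeLE; infer_instance

/-- A flat layout is sorted if its consecutive modes are `⪯`-increasing. -/
def Sorted (L : FlatLayout) : Prop := L.Chain' ModeLE

/-- `sortL L` stably sorts the modes of `L` with respect to `⪯`. -/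
def sortL (L : FlatLayout) : FlatLayout := L.mergeSort fun p q => decide (ModeLE p q)

/-- A flat layout is coalesced if no shape entry equals `1` and
for consecutive modes, `sᵢ·dᵢ ≠ dᵢ₊₁`. -/
def Coalesced (L : FlatLayout) : Prop :=
  (∀ p ∈ L, p.1 ≠ 1) ∧ L.Chain' fun p q => p.1 * p.2 ≠ q.2

/-- Combine adjacent modes `(s,d), (s',d')` with `d' = s·d` into `(s·s', d)`, repeatedly. -/
def coalAux : List (ℕ × ℕ) → List (ℕ × ℕ)
  | [] => []
  | p :: rest =>
    match coalAux rest with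
    | [] => [p]
    | q :: rest' =>
        if p.1 * p.2 = q.2 then (p.1 * q.1, p.2) :: rest' else p :: q :: rest'

/-- Coalesce of a flat layout: squeeze, then repeatedly combine adjacent modes
`(s,d), (s',d')` with `d' = s·d` into `(s·s', d)`. -/
def coal (L : FlatLayout) : FlatLayout := coalAux (squeeze L)

/-- Compactness: the layout function takes values in `{0, …, cosize L - 1}` and induces a
bijection `{0, …, size L - 1} → {0, …, cosize L - 1}`. -/
def Compact (L : FlatLayout) : Prop :=
  Set.BijOn (phi L) {x | x < size L} {y | y < cosize L}

/-- `B` is a complement of `A` (written `A ⊥ B`) if the concatenation `A ⋆ B` is compact. -/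
def Perp (A B : FlatLayout) : Prop := Compact (A ++ B)

/-- `A` is complementable if, writing `sort(squeeze A) = (s₁,…,sₘ):(d₁,…,dₘ)`,
`sᵢ·dᵢ` divides `dᵢ₊₁` for all `1 ≤ i < m`. -/
def Complementable (A : FlatLayout) : Prop :=
  (sortL (squeeze A)).Chain' fun p q => p.1 * p.2 ∣ q.2

/-- `B` is an `N`-complement of `A` if `B` is a complement of `A`
and `size A * size B = N`. -/
def IsNComplement (A B : FlatLayout) (N : ℕ) : Prop :=
  Perp A B ∧ size A * size B = N

/-- `A` is `N`-complementable if, writing `sort(squeeze A) = (s₁,…,sₘ):(d₁,…,dₘ)`,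
`sᵢ·dᵢ ∣ dᵢ₊₁` for all `1 ≤ i < m`, and `sₘ·dₘ ∣ N`. -/
def NComplementable (A : FlatLayout) (N : ℕ) : Prop :=
  ((sortL (squeeze A)).Chain' fun p q => p.1 * p.2 ∣ q.2) ∧
  ∀ p, (sortL (squeeze A)).getLast? = some p → p.1 * p.2 ∣ N

/-- Given `l = [(s₁,d₁),…,(sₘ,dₘ)]`, the layout
`C = (d₁, d₂/(s₁d₁), …, dₘ/(sₘ₋₁dₘ₋₁)) : (1, s₁d₁, …, sₘ₋₁dₘ₋₁)`. -/
def compModes (l : List (ℕ × ℕ)) : List (ℕ × ℕ) :=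
  match l with
  | [] => []
  | (_, d₁) :: t =>
      (d₁, 1) :: (l.zip t).map fun pq => (pq.2.2 / (pq.1.1 * pq.1.2), pq.1.1 * pq.1.2)

/-- The complement `comp A = coal C` of a complementable flat layout `A`. -/
def comp (A : FlatLayout) : FlatLayout := coal (compModes (sortL (squeeze A)))

/-- Given `l = [(s₁,d₁),…,(sₘ,dₘ)]` and `N`, the layout
`C = (d₁, d₂/(s₁d₁), …, dₘ/(sₘ₋₁dₘ₋₁), N/(sₘdₘ)) : (1, s₁d₁, …, sₘ₋₁dₘ₋₁, sₘdₘ)`. -/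
def compNModes (l : List (ℕ × ℕ)) (N : ℕ) : List (ℕ × ℕ) :=
  match l.getLast? with
  | none => [(N, 1)]
  | some (sm, dm) => compModes l ++ [(N / (sm * dm), sm * dm)]

/-- The `N`-complement `comp(A, N) = coal C` of an `N`-complementable flat layout `A`. -/
def compN (A : FlatLayout) (N : ℕ) : FlatLayout :=
  coal (compNModes (sortL (squeeze A)) N)

/-- `L` is tractable if, writing `sort L = (s₁,…,sₘ):(d₁,…,dₘ)`, for every `1 ≤ i < m`
either `dᵢ = 0` or `sᵢ·dᵢ` divides `dᵢ₊₁`. -/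
def Tractable (L : FlatLayout) : Prop :=
  (sortL L).Chain' fun p q => p.2 = 0 ∨ p.1 * p.2 ∣ q.2

end FlatLayout

/-!
Compactness of a layout depends only on the multiset of values of its layout function, and this
multiset does not change when modes are permuted or modes of shape `1` are dropped. A layout whose
modes, sorted by stride and of shape at least `2`, take each of the values `0, …, N - 1` exactly
once must have strides `1, s₁, s₁s₂, …`: the first stride is the least positive value, hence `1`,
and the remaining modes then tile `{0, …, N - 1}` in blocks of length `s₁`. If `A ⋆ B` is compact,
the sorted modes of `A` form a subsequence of such a chain, whence `sᵢdᵢ ∣ dᵢ₊₁` and `sₘdₘ ∣ N`.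
Conversely, under these conditions the modes `(dᵢ₊₁ / (sᵢdᵢ), sᵢdᵢ)` (with `s₀d₀ = 1` and
`dₘ₊₁ = N`) fill the gaps between consecutive modes of `A` and complete them to such a chain.
-/

namespace FlatLayout

open Multiset (range)

theorem size_cons (p : ℕ × ℕ) (L : FlatLayout) : size (p :: L) = p.1 * size L := by
  simp [size]

theorem size_append (A B : FlatLayout) : size (A ++ B) = size A * size B := by
  simp [size]

theorem size_perm {A B : FlatLayout} (h : A.Perm B) : size A = size B :=
  (h.map Prod.fst).prod_eq

theorem size_squeeze (L : FlatLayout) : size (squeeze L) = size L := by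
  induction L with
  | nil => rfl
  | cons p L ih =>
    by_cases hp : p.1 = 1 <;> simp_all [squeeze, size]

theorem valid_iff_size_pos {L : FlatLayout} : Valid L ↔ 0 < size L := by
  simp [Valid, size, Nat.pos_iff_ne_zero]

theorem cosize_cons (p : ℕ × ℕ) (L : FlatLayout) :
    cosize (p :: L) = (p.1 - 1) * p.2 + cosize L := by
  simp [cosize]; omega

/-- The multiset of values of `phi L` on `{0, …, size L - 1}` (`values_eq_map_phi`), built mode by
mode so that it visibly does not depend on the order of the modes. -/
def values : FlatLayout → Multiset ℕ
  | [] => {0}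
  | (s, d) :: L => (range s).bind fun r => (values L).map (r * d + ·)

theorem values_cons (p : ℕ × ℕ) (L : FlatLayout) :
    values (p :: L) = (range p.1).bind fun r => (values L).map (r * p.2 + ·) := rfl

theorem mem_values_cons {p : ℕ × ℕ} {z : ℕ} {L : FlatLayout} :
    z ∈ values (p :: L) ↔ ∃ r < p.1, ∃ w ∈ values L, r * p.2 + w = z := by
  simp [values_cons]

theorem card_values (L : FlatLayout) : Multiset.card (values L) = size L := by
  induction L with
  | nil => rfl
  | cons p L ih => simp [values_cons, size_cons, ih, Multiset.map_const']

theorem zero_mem_values {L : FlatLayout} (h : Valid L) : 0 ∈ values L := by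
  induction L with
  | nil => simp [values]
  | cons p L ih =>
    exact mem_values_cons.2 ⟨0, h p (by simp), 0, ih fun q hq => h q (by simp [hq]), by simp⟩

theorem eq_zero_or_le_of_mem_values {e : ℕ} {L : FlatLayout} (h : ∀ p ∈ L, e ≤ p.2) :
    ∀ z ∈ values L, z = 0 ∨ e ≤ z := by
  induction L with
  | nil => simp [values]
  | cons p L ih =>
    intro z hz
    obtain ⟨r, -, w, hw, rfl⟩ := mem_values_cons.1 hz
    rcases ih (fun q hq => h q (by simp [hq])) w hw with rfl | hew
    · rcases Nat.eq_zero_or_pos r with rfl | hr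
      · simp
      · have := Nat.le_mul_of_pos_left p.2 hr
        have := h p (by simp)
        omega
    · omega

theorem lt_cosize_of_mem_values {L : FlatLayout} : ∀ z ∈ values L, z < cosize L := by
  induction L with
  | nil => simp [values, cosize]
  | cons p L ih =>
    intro z hz
    obtain ⟨r, hr, w, hw, rfl⟩ := mem_values_cons.1 hz
    have : r * p.2 ≤ (p.1 - 1) * p.2 := Nat.mul_le_mul_right _ (by omega)
    have := ih w hw
    rw [cosize_cons]
    omega

theorem cosize_sub_one_mem_values {L : FlatLayout} (h : Valid L) : cosize L - 1 ∈ values L := by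
  induction L with
  | nil => simp [values, cosize]
  | cons p L ih =>
    have hs : 0 < p.1 := h p (by simp)
    have hL : 0 < cosize L := by simp [cosize]
    refine mem_values_cons.2 ⟨p.1 - 1, by omega, cosize L - 1, ih fun q hq => h q (by simp [hq]), ?_⟩
    rw [cosize_cons]
    omega

theorem values_perm {L L' : FlatLayout} (h : L.Perm L') : values L = values L' := by
  induction h with
  | nil => rfl
  | cons p _ ih => simp [values_cons, ih]
  | swap p q L =>
    simp only [values_cons, Multiset.map_bind, Multiset.map_map, Function.comp_def]
    rw [Multiset.bind_bind]
    refine Multiset.bind_congr fun _ _ => Multiset.bind_congr fun _ _ =>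
      Multiset.map_congr rfl fun _ _ => by omega
  | trans _ _ ih₁ ih₂ => exact ih₁.trans ih₂

theorem values_append (A B : FlatLayout) :
    values (A ++ B) = (values A).bind fun a => (values B).map (a + ·) := by
  induction A with
  | nil => simp [values]
  | cons p A ih =>
    simp only [List.cons_append, values_cons, ih, Multiset.map_bind, Multiset.bind_assoc,
      Multiset.bind_map, Multiset.map_map, Function.comp_def]
    refine Multiset.bind_congr fun _ _ => Multiset.bind_congr fun _ _ =>
      Multiset.map_congr rfl fun _ _ => by omega

theorem values_squeeze (L : FlatLayout) : values (squeeze L) = values L := by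
  induction L with
  | nil => rfl
  | cons p L ih =>
    by_cases hp : p.1 = 1
    · have : squeeze (p :: L) = squeeze L := by simp [squeeze, hp]
      simp [this, ih, values_cons, hp, Multiset.range_succ]
    · have : squeeze (p :: L) = p :: squeeze L := by simp [squeeze, hp]
      simp [this, values_cons, ih]

theorem range_mul_eq_bind (a b : ℕ) :
    range (a * b) = (range a).bind fun r => (range b).map (r + a * ·) := by
  induction b with
  | zero => simp
  | succ b ih =>
    rw [Nat.mul_succ, Multiset.range_add, ih, Multiset.range_succ]
    simp only [Multiset.map_cons, Multiset.bind_cons]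
    rw [add_comm]
    exact congrArg₂ _ (Multiset.map_congr rfl fun _ _ => by omega) rfl

theorem values_eq_map_phi {L : FlatLayout} (h : Valid L) :
    values L = (range (size L)).map (phi L) := by
  induction L with
  | nil => rfl
  | cons p L ih =>
    obtain ⟨s, d⟩ := p
    have hs : 0 < s := h (s, d) (by simp)
    rw [values_cons, ih fun q hq => h q (by simp [hq]), size_cons, range_mul_eq_bind,
      Multiset.map_bind]
    refine Multiset.bind_congr fun r hr => ?_
    simp only [Multiset.map_map, Function.comp_def]
    refine Multiset.map_congr rfl fun q _ => ?_
    have hr : r < s := Multiset.mem_range.1 hr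
    simp [phi, Nat.add_mul_mod_self_left, Nat.add_mul_div_left _ _ hs, Nat.mod_eq_of_lt hr,
      Nat.div_eq_of_lt hr]

theorem bijOn_iff_map_range_eq {f : ℕ → ℕ} {n m : ℕ} :
    Set.BijOn f {x | x < n} {y | y < m} ↔ (range n).map f = range m := by
  constructor
  · rintro ⟨hmaps, hinj, hsurj⟩
    refine (Multiset.nodup_range n).map_on (fun x hx y hy => hinj (by simpa using hx)
      (by simpa using hy)) |>.ext (Multiset.nodup_range m) |>.2 fun y => ?_
    simp only [Multiset.mem_map, Multiset.mem_range]
    exact ⟨fun ⟨x, hx, hxy⟩ => hxy ▸ hmaps hx, fun hy => hsurj hy⟩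
  · intro h
    have hmem : ∀ y, y ∈ (range n).map f ↔ y < m := by simp [h]
    refine ⟨fun x hx => (hmem _).1 (Multiset.mem_map_of_mem f (by simpa using hx)),
      fun x hx y hy hxy => Multiset.inj_on_of_nodup_map (h ▸ Multiset.nodup_range m) x
        (by simpa using hx) y (by simpa using hy) hxy, fun y hy => ?_⟩
    simpa using (hmem y).2 hy

theorem cosize_eq_of_values_eq_range {L : FlatLayout} {n : ℕ} (h : Valid L)
    (hv : values L = range n) : cosize L = n := by
  have h₁ : cosize L - 1 < n := Multiset.mem_range.1 (hv ▸ cosize_sub_one_mem_values h)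
  have h₀ : 0 < n := Multiset.mem_range.1 (hv ▸ zero_mem_values h)
  have h₂ : n - 1 < cosize L :=
    lt_cosize_of_mem_values _ (hv ▸ Multiset.mem_range.2 (Nat.sub_one_lt_of_lt h₀))
  omega

theorem compact_iff {L : FlatLayout} (h : Valid L) :
    Compact L ↔ values L = range (size L) := by
  rw [Compact, bijOn_iff_map_range_eq, ← values_eq_map_phi h]
  refine ⟨fun hv => ?_, fun hv => ?_⟩
  · rw [← card_values, hv, Multiset.card_range]
  · rwa [cosize_eq_of_values_eq_range h hv]

/-- The least term `m` of the progression forces `m ∈ W`; removing it removes the first `t` terms. -/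
theorem eq_map_of_range_bind_eq_range {t c : ℕ} (ht : 0 < t) (hc : 0 < c) :
    ∀ {K m : ℕ} {W : Multiset ℕ},
      ((range t).bind fun r => W.map (r * c + ·)) = (range (t * K)).map (m + c * ·) →
      W = (range K).map (m + c * t * ·)
  | 0, m, W, h => by
    refine Multiset.eq_zero_of_forall_notMem fun w hw => ?_
    have : w ∈ (range t).bind fun r => W.map (r * c + ·) :=
      Multiset.mem_bind.2 ⟨0, Multiset.mem_range.2 ht, Multiset.mem_map.2 ⟨w, hw, by simp⟩⟩
    simp [h] at this
  | K + 1, m, W, h => by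
    have hge : ∀ w ∈ W, m ≤ w := fun w hw => by
      have : w ∈ (range (t * (K + 1))).map (m + c * ·) :=
        h ▸ Multiset.mem_bind.2 ⟨0, Multiset.mem_range.2 ht, Multiset.mem_map.2 ⟨w, hw, by simp⟩⟩
      obtain ⟨k, -, rfl⟩ := Multiset.mem_map.1 this
      omega
    have hmW : m ∈ W := by
      have : m ∈ (range (t * (K + 1))).map (m + c * ·) :=
        Multiset.mem_map.2 ⟨0, Multiset.mem_range.2 (by positivity), by simp⟩
      rw [← h] at this
      simp only [Multiset.mem_bind, Multiset.mem_map, Multiset.mem_range] at this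
      obtain ⟨r, -, w, hw, hrw⟩ := this
      have := hge w hw
      obtain rfl : w = m := by nlinarith
      exact hw
    obtain ⟨W₀, rfl⟩ := Multiset.exists_cons_of_mem hmW
    have h₀ : ((range t).bind fun r => W₀.map (r * c + ·)) =
        (range (t * K)).map (m + c * t + c * ·) := by
      rw [Nat.mul_succ, add_comm, Multiset.range_add, Multiset.map_add] at h
      simp only [Multiset.map_cons, Multiset.bind_cons, Multiset.map_map, Function.comp_def] at h
      have hbase : (range t).map (fun r => r * c + m) = (range t).map (m + c * ·) :=
        Multiset.map_congr rfl fun _ _ => by ring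
      rw [hbase, add_right_inj] at h
      exact h.trans (Multiset.map_congr rfl fun _ _ => by ring)
    rw [eq_map_of_range_bind_eq_range ht hc h₀, add_comm K, Multiset.range_add,
      Multiset.map_add]
    simp only [Multiset.map_map, Function.comp_def, Multiset.range_succ, Multiset.range_zero,
      Multiset.cons_zero]
    exact congrArg _ (Multiset.map_congr rfl fun _ _ => by ring)

/-- The value `e` is a multiple of `c`, and the value `c` is either `0` or at least the least
stride `e`; if `e = 0`, the value `0` would be taken twice. -/
theorem stride_eq_of_values {t e c : ℕ} {L : FlatLayout} (ht : 1 < t) (hL : Valid L)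
    (hLe : ∀ p ∈ L, e ≤ p.2) (hc : 0 < c)
    (h : values ((t, e) :: L) = (range (t * size L)).map (c * ·)) : e = c := by
  have h0 : 0 ∈ values L := zero_mem_values hL
  have hnodup : (values ((t, e) :: L)).Nodup :=
    h ▸ (Multiset.nodup_range _).map (mul_right_injective₀ hc.ne')
  have he : e ≠ 0 := by
    rintro rfl
    obtain ⟨t, rfl⟩ : ∃ t', t = t' + 2 := ⟨t - 2, by omega⟩
    rw [values_cons, Multiset.range_succ, Multiset.cons_bind, Multiset.nodup_add] at hnodup
    exact Multiset.disjoint_left.1 hnodup.2.2 (by simpa using h0)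
      (Multiset.mem_bind.2 ⟨0, Multiset.mem_range.2 t.succ_pos, by simpa using h0⟩)
  have hce : c ≤ e := by
    have : e ∈ values ((t, e) :: L) := mem_values_cons.2 ⟨1, ht, 0, h0, by simp⟩
    obtain ⟨k, -, hk⟩ := Multiset.mem_map.1 (h ▸ this)
    rcases k with _ | k
    · omega
    · nlinarith
  have hec : e ≤ c := by
    have hK : 0 < size L := valid_iff_size_pos.1 hL
    have : c ∈ values ((t, e) :: L) :=
      h ▸ Multiset.mem_map.2 ⟨1, Multiset.mem_range.2 (by nlinarith), mul_one c⟩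
    have hstrides : ∀ p ∈ (t, e) :: L, e ≤ p.2 := by simpa using hLe
    have := eq_zero_or_le_of_mem_values hstrides c this
    omega
  omega

def ExtentDvd (p q : ℕ × ℕ) : Prop := p.1 * p.2 ∣ q.2

/-- `List.IsChain ExtentEq (a :: L)` says that the strides of `L` are `c, cs₁, cs₁s₂, …` with
`c = a.1 * a.2`: up to the scale `c`, `L` is compact with its modes in order. -/
def ExtentEq (p q : ℕ × ℕ) : Prop := p.1 * p.2 = q.2

instance : Trans ExtentDvd ExtentDvd ExtentDvd :=
  ⟨fun hpq hqr => hpq.trans ((dvd_mul_left _ _).trans hqr)⟩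

theorem ExtentEq.extentDvd {p q : ℕ × ℕ} (h : ExtentEq p q) : ExtentDvd p q :=
  dvd_of_eq h

theorem isChain_of_values {a : ℕ × ℕ} {L : FlatLayout}
    (hsort : L.Pairwise fun p q => p.2 ≤ q.2) (hshape : ∀ p ∈ L, 1 < p.1) (ha : 0 < a.1 * a.2)
    (h : values L = (range (size L)).map (a.1 * a.2 * ·)) : List.IsChain ExtentEq (a :: L) := by
  induction L generalizing a with
  | nil => exact .singleton a
  | cons p L ih =>
    obtain ⟨t, e⟩ := p
    obtain ⟨hpL, hsortL⟩ := List.pairwise_cons.1 hsort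
    have ht : 1 < t := hshape (t, e) (by simp)
    have hshapeL : ∀ q ∈ L, 1 < q.1 := fun q hq => hshape q (by simp [hq])
    rw [size_cons] at h
    have he : e = a.1 * a.2 :=
      stride_eq_of_values ht (fun q hq => Nat.zero_lt_of_lt (hshapeL q hq)) hpL ha h
    rw [← he] at h ha
    refine .cons_cons he.symm (ih hsortL hshapeL (Nat.mul_pos (by omega) ha) ?_)
    have := eq_map_of_range_bind_eq_range (t := t) (K := size L) (m := 0) (by omega) ha
      (by simpa [values_cons] using h)
    simpa [mul_comm] using this

theorem values_of_isChain {a : ℕ × ℕ} {L : FlatLayout} (h : List.IsChain ExtentEq (a :: L)) :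
    values L = (range (size L)).map (a.1 * a.2 * ·) := by
  induction L generalizing a with
  | nil => rfl
  | cons p L ih =>
    obtain ⟨t, e⟩ := p
    obtain ⟨he, hL⟩ := List.isChain_cons_cons.1 h
    have he : a.1 * a.2 = e := he
    rw [values_cons, ih hL, size_cons, range_mul_eq_bind, Multiset.map_bind]
    refine Multiset.bind_congr fun r _ => ?_
    simp only [Multiset.map_map, Function.comp_def]
    exact Multiset.map_congr rfl fun _ _ => by rw [← he]; ring

theorem isChain_extentEq_append_iff {x n : ℕ} {a : ℕ × ℕ} {L : FlatLayout} :
    List.IsChain ExtentEq (a :: L ++ [(x, n)]) ↔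
      List.IsChain ExtentEq (a :: L) ∧ a.1 * a.2 * size L = n := by
  induction L generalizing a with
  | nil => simp [ExtentEq, size]
  | cons p L ih =>
    simp only [List.cons_append, List.isChain_cons_cons] at ih ⊢
    rw [ih, size_cons, ExtentEq]
    constructor
    · rintro ⟨he, hL, hn⟩
      exact ⟨⟨he, hL⟩, by rw [← hn, ← he]; ring⟩
    · rintro ⟨⟨he, hL⟩, hn⟩
      exact ⟨he, hL, by rw [← hn, ← he]; ring⟩

instance : Std.Antisymm ModeLE :=
  ⟨fun _ _ h₁ h₂ => by unfold ModeLE at h₁ h₂; exact Prod.ext (by omega) (by omega)⟩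

theorem sortL_perm (L : FlatLayout) : (sortL L).Perm L :=
  List.mergeSort_perm L _

theorem sortL_pairwise (L : FlatLayout) : (sortL L).Pairwise ModeLE := by
  refine (List.pairwise_mergeSort (fun _ _ _ h₁ h₂ => ?_) (fun _ _ => ?_) L).imp of_decide_eq_true
  · simp only [decide_eq_true_eq] at h₁ h₂ ⊢
    unfold ModeLE at h₁ h₂ ⊢
    omega
  · simp only [Bool.or_eq_true, decide_eq_true_eq]
    unfold ModeLE
    omega

theorem sortL_squeeze_sublist (A B : FlatLayout) :
    (sortL (squeeze A)).Sublist (sortL (squeeze (A ++ B))) := by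
  have hsub : (squeeze A).Sublist (squeeze (A ++ B)) := (List.sublist_append_left A B).filter _
  exact List.sublist_of_subperm_of_pairwise
    ((sortL_perm _).subperm.trans (hsub.subperm.trans (sortL_perm _).symm.subperm))
    (sortL_pairwise _) (sortL_pairwise _)

theorem one_lt_of_mem_sortL_squeeze {L : FlatLayout} (h : Valid L) :
    ∀ p ∈ sortL (squeeze L), 1 < p.1 := by
  intro p hp
  obtain ⟨hpL, hp1⟩ := List.mem_filter.1 ((sortL_perm _).mem_iff.1 hp)
  have := h p hpL
  simp only [bne_iff_ne] at hp1
  omega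

/-- With `c = 1`, these are the modes of `compNModes l N`. -/
def complementModes (N : ℕ) : ℕ → FlatLayout → FlatLayout
  | c, [] => [(N / c, c)]
  | c, (s, d) :: l => (d / c, c) :: complementModes N (s * d) l

def interleave (N : ℕ) : ℕ → FlatLayout → FlatLayout
  | c, [] => [(N / c, c)]
  | c, (s, d) :: l => (d / c, c) :: (s, d) :: interleave N (s * d) l

theorem perm_interleave (N c : ℕ) (l : FlatLayout) :
    (l ++ complementModes N c l).Perm (interleave N c l) := by
  induction l generalizing c with
  | nil => rfl
  | cons p l ih =>
    obtain ⟨s, d⟩ := p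
    exact (List.perm_middle.cons _).trans ((List.Perm.swap _ _ _).trans (((ih _).cons _).cons _))

theorem isChain_interleave {N : ℕ} {a : ℕ × ℕ} {l : FlatLayout}
    (h : List.IsChain ExtentDvd (a :: l ++ [(1, N)])) :
    List.IsChain ExtentEq (a :: interleave N (a.1 * a.2) l ++ [(1, N)]) := by
  induction l generalizing a with
  | nil =>
    have h : a.1 * a.2 ∣ N := by simpa [ExtentDvd] using h
    simp [interleave, ExtentEq, Nat.div_mul_cancel h]
  | cons p l ih =>
    obtain ⟨s, d⟩ := p
    obtain ⟨hd, hl⟩ := List.isChain_cons_cons.1 h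
    have hd : a.1 * a.2 ∣ d := by simpa [ExtentDvd] using hd
    simp only [interleave, List.cons_append, List.isChain_cons_cons]
    exact ⟨by simp [ExtentEq], Nat.div_mul_cancel hd, ih hl⟩

theorem nComplementable_iff_isChain {A : FlatLayout} {N : ℕ} :
    NComplementable A N ↔ List.IsChain ExtentDvd (sortL (squeeze A) ++ [(1, N)]) := by
  change List.IsChain ExtentDvd _ ∧ _ ↔ _
  simp [List.isChain_append, ExtentDvd]

theorem nComplementable_of_isNComplement {A B : FlatLayout} {N : ℕ} (hN : 0 < N)
    (h : IsNComplement A B N) : NComplementable A N := by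
  obtain ⟨hcompact, hsize⟩ := h
  rw [← size_append] at hsize
  have hvalid : Valid (A ++ B) := valid_iff_size_pos.2 (hsize ▸ hN)
  set L := sortL (squeeze (A ++ B))
  have hsizeL : size L = N := by rw [size_perm (sortL_perm _), size_squeeze, hsize]
  have hvalues : values L = range (size L) := by
    rw [hsizeL, values_perm (sortL_perm _), values_squeeze, (compact_iff hvalid).1 hcompact,
      hsize]
  have hchain : List.IsChain ExtentEq ((1, 1) :: L ++ [(1, N)]) :=
    isChain_extentEq_append_iff.2 ⟨isChain_of_values
      ((sortL_pairwise _).imp fun h => by unfold ModeLE at h; omega)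
      (one_lt_of_mem_sortL_squeeze hvalid) one_pos (by simpa using hvalues), by simp [hsizeL]⟩
  rw [nComplementable_iff_isChain]
  exact (hchain.imp fun _ _ => ExtentEq.extentDvd).sublist
    (((sortL_squeeze_sublist A B).append_right _).cons _)

theorem isNComplement_complementModes {A : FlatLayout} {N : ℕ} (hN : 0 < N)
    (h : NComplementable A N) :
    Valid (complementModes N 1 (sortL (squeeze A))) ∧
      IsNComplement A (complementModes N 1 (sortL (squeeze A))) N := by
  set l := sortL (squeeze A)
  set B := complementModes N 1 l
  have hperm : (l ++ B).Perm (interleave N 1 l) := perm_interleave N 1 l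
  have hchain : List.IsChain ExtentEq ((1, 1) :: interleave N 1 l ++ [(1, N)]) :=
    isChain_interleave ((nComplementable_iff_isChain.1 h).cons (by simp [ExtentDvd]))
  obtain ⟨hchain, hsizeI⟩ := isChain_extentEq_append_iff.1 hchain
  rw [one_mul, one_mul] at hsizeI
  have hsize : size (A ++ B) = N := by
    rw [size_append, ← size_squeeze A, ← size_perm (sortL_perm _), ← size_append,
      size_perm hperm, hsizeI]
  have hvalues : values (A ++ B) = range N := by
    rw [values_append, ← values_squeeze A, ← values_perm (sortL_perm _), ← values_append,
      values_perm hperm, values_of_isChain hchain, hsizeI]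
    simp
  have hvalid : Valid (A ++ B) := valid_iff_size_pos.2 (hsize ▸ hN)
  exact ⟨fun p hp => hvalid p (List.mem_append_right _ hp),
    (compact_iff hvalid).2 (hsize ▸ hvalues), by rw [← size_append, hsize]⟩

end FlatLayout

open FlatLayout in
theorem exists_NComplement_iff_general (A : FlatLayout) (N : ℕ) (hN : 0 < N) :
    (∃ B : FlatLayout, B.Valid ∧ IsNComplement A B N) ↔ NComplementable A N :=
  ⟨fun ⟨_, _, h⟩ => nComplementable_of_isNComplement hN h,
    fun h => ⟨_, isNComplement_complementModes hN h⟩⟩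

open FlatLayout in
theorem exists_NComplement_iff (A : FlatLayout) (N : ℕ) (hA : A.Valid) (hN : 0 < N) :
    (∃ B : FlatLayout, B.Valid ∧ IsNComplement A B N) ↔ NComplementable A N :=
  exists_NComplement_iff_general A N hN
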